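/- Let p ≥ 1 be a natural number, let R be a commutative ring in which n! is invertible for every n ≤ p-1, and let ε ∈ R satisfy ε^p = 0. Define the twisted exponential polynomial E_ε(t) = ∑_{n=0}^{p-1} (ε^n/n!)·t^n ∈ R[t]. Then, in the polynomial ring R[u,v] in two variables, E_ε(u+v) = E_ε(u)·E_ε(v). -/
import Mathlib

open Finset

lemma triangle_sum_aux {M : Type*} [AddCommMonoid M] (p : ℕ) (g : ℕ → ℕ → M) :
    ∑ n ∈ range p, ∑ k ∈ range (n + 1), g k (n - k)
      = ∑ ij ∈ (range p ×ˢ range p).filter (fun ij => ij.1 + ij.2 < p), g ij.1 ij.2 := by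
  rw [Finset.sum_sigma']
  apply Finset.sum_nbij' (fun x => (x.2, x.1 - x.2)) (fun x => ⟨x.1 + x.2, x.1⟩)
  · rintro ⟨n, k⟩ h
    simp only [mem_sigma, mem_range] at h
    simp only [mem_filter, mem_product, mem_range]
    omega
  · rintro ⟨i, j⟩ h
    simp only [mem_filter, mem_product, mem_range] at h
    simp only [mem_sigma, mem_range]
    omega
  · rintro ⟨n, k⟩ h
    simp only [mem_sigma, mem_range] at h
    have : k + (n - k) = n := by omega
    simp only [this]
  · rintro ⟨i, j⟩ h
    simp only [mem_filter, mem_product, mem_range] at h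
    simp only [Prod.mk.injEq, true_and]
    omega
  · rintro ⟨n, k⟩ h
    rfl

/-- Multiplicativity of the twisted exponential: if `n!` is invertible in `R` for all
`n ≤ p-1` and `ε^p = 0`, then the polynomial `E_ε(t) = ∑_{n<p} (ε^n/n!)·tⁿ` satisfies
`E_ε(u+v) = E_ε(u)·E_ε(v)` in the polynomial ring `R[u,v]`. -/
theorem twisted_exponential_multiplicative {R : Type*} [CommRing R]
    (p : ℕ) (hp : 1 ≤ p) (hfac : ∀ n ≤ p - 1, IsUnit (n.factorial : R))
    (ε : R) (hε : ε ^ p = 0) :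
    let E : Polynomial R := ∑ n ∈ Finset.range p,
      Polynomial.C (Ring.inverse (n.factorial : R) * ε ^ n) * Polynomial.X ^ n
    Polynomial.aeval
        (MvPolynomial.X 0 + MvPolynomial.X 1 : MvPolynomial (Fin 2) R) E
      = Polynomial.aeval (MvPolynomial.X 0 : MvPolynomial (Fin 2) R) E *
        Polynomial.aeval (MvPolynomial.X 1 : MvPolynomial (Fin 2) R) E := by
  intro E
  simp only [E, map_sum, map_mul, map_pow, Polynomial.aeval_C, Polynomial.aeval_X]
  set A := MvPolynomial (Fin 2) R
  set x : A := MvPolynomial.X 0 with hx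
  set y : A := MvPolynomial.X 1 with hy
  set alg := algebraMap R A with halg
  simp only [← map_pow alg, ← map_mul alg]
  -- nilpotency beyond p
  have hnil : ∀ m, p ≤ m → ε ^ m = 0 := by
    intro m hm
    rw [show m = p + (m - p) by omega, pow_add, hε, zero_mul]
  -- the key arithmetic identity on inverses of factorials
  have key : ∀ n < p, ∀ k ≤ n,
      Ring.inverse ((n.factorial : R)) * (n.choose k : R)
        = Ring.inverse (k.factorial : R) * Ring.inverse ((n - k).factorial : R) := by
    intro n hn k hk
    have hun := hfac n (by omega)
    have huk := hfac k (by have := Nat.factorial_le (show k ≤ n by omega); omega)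
    have hunk := hfac (n - k) (by omega)
    have hfac' : (n.choose k : R) * (k.factorial : R) * ((n - k).factorial : R)
        = (n.factorial : R) := by
      rw_mod_cast [Nat.choose_mul_factorial_mul_factorial hk]
    calc Ring.inverse ((n.factorial : R)) * (n.choose k : R)
        = Ring.inverse ((n.factorial : R)) * (n.choose k : R)
            * (Ring.inverse (k.factorial : R) * (k.factorial : R))
            * (Ring.inverse ((n - k).factorial : R) * ((n - k).factorial : R)) := by
          rw [Ring.inverse_mul_cancel _ huk, Ring.inverse_mul_cancel _ hunk]; ring
      _ = Ring.inverse (k.factorial : R) * Ring.inverse ((n - k).factorial : R)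
            * (Ring.inverse ((n.factorial : R))
              * ((n.choose k : R) * (k.factorial : R) * ((n - k).factorial : R))) := by
          ring
      _ = Ring.inverse (k.factorial : R) * Ring.inverse ((n - k).factorial : R)
            * (Ring.inverse ((n.factorial : R)) * (n.factorial : R)) := by rw [hfac']
      _ = Ring.inverse (k.factorial : R) * Ring.inverse ((n - k).factorial : R) := by
          rw [Ring.inverse_mul_cancel _ hun, mul_one]
  -- abbreviation for the coefficients
  set c : ℕ → R := fun n => Ring.inverse (n.factorial : R) * ε ^ n with hc
  -- expand the RHS as a double sum
  rw [Finset.sum_mul_sum]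
  -- the common pairwise term
  have hL : ∑ n ∈ range p, alg (c n) * (x + y) ^ n
      = ∑ n ∈ range p, ∑ k ∈ range (n + 1),
          (alg (c k) * x ^ k) * (alg (c (n - k)) * y ^ (n - k)) := by
    refine Finset.sum_congr rfl fun n hn => ?_
    rw [mem_range] at hn
    rw [add_pow, Finset.mul_sum]
    refine Finset.sum_congr rfl fun k hk => ?_
    rw [mem_range] at hk
    have hk' : k ≤ n := by omega
    have hsc' : c k * c (n - k)
        = Ring.inverse (n.factorial : R) * ε ^ n * (n.choose k : R) := by
      have e1 : ε ^ k * ε ^ (n - k) = ε ^ n := by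
        rw [← pow_add]; congr 1; omega
      calc c k * c (n - k)
          = (Ring.inverse (k.factorial : R) * Ring.inverse ((n - k).factorial : R))
              * (ε ^ k * ε ^ (n - k)) := by simp only [hc]; ring
        _ = (Ring.inverse (k.factorial : R) * Ring.inverse ((n - k).factorial : R)) * ε ^ n := by
            rw [e1]
        _ = (Ring.inverse ((n.factorial : R)) * (n.choose k : R)) * ε ^ n := by
            rw [← key n hn k hk']
        _ = Ring.inverse (n.factorial : R) * ε ^ n * (n.choose k : R) := by ring
    have hterm : (alg (c k) * x ^ k) * (alg (c (n - k)) * y ^ (n - k))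
        = alg (c n) * ((n.choose k : A)) * (x ^ k * y ^ (n - k)) := by
      calc (alg (c k) * x ^ k) * (alg (c (n - k)) * y ^ (n - k))
          = alg (c k) * alg (c (n - k)) * (x ^ k * y ^ (n - k)) := by ring
        _ = alg (c k * c (n - k)) * (x ^ k * y ^ (n - k)) := by
            rw [← map_mul alg (c k) (c (n - k))]
        _ = alg (Ring.inverse (n.factorial : R) * ε ^ n * (n.choose k : R))
              * (x ^ k * y ^ (n - k)) := by rw [hsc']
        _ = alg (c n) * ((n.choose k : A)) * (x ^ k * y ^ (n - k)) := by
            rw [map_mul alg (Ring.inverse (n.factorial : R) * ε ^ n) ((n.choose k : R)),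
              map_natCast]
    rw [hterm]; ring
  rw [hL, triangle_sum_aux p (fun i j => (alg (c i) * x ^ i) * (alg (c j) * y ^ j))]
  rw [← Finset.sum_product']
  refine Finset.sum_subset (Finset.filter_subset _ _) ?_
  rintro ⟨i, j⟩ hij hnotin
  simp only [mem_filter, mem_product, mem_range] at hij hnotin
  have hpij : p ≤ i + j := by omega
  have h0 : ε ^ i * ε ^ j = 0 := by
    rw [← pow_add]; exact hnil _ hpij
  have : c i * c j = 0 := by
    calc c i * c j = (Ring.inverse (i.factorial : R) * Ring.inverse (j.factorial : R))
          * (ε ^ i * ε ^ j) := by simp only [hc]; ring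
      _ = 0 := by rw [h0, mul_zero]
  calc (alg (c i) * x ^ i) * (alg (c j) * y ^ j)
      = alg (c i * c j) * (x ^ i * y ^ j) := by
        rw [map_mul alg (c i) (c j)]; ring
    _ = 0 := by rw [this, map_zero, zero_mul]
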